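/- arXiv:0708.3308 — 6 statements merged into one kernel-verified Lean document; each statement's English description precedes it below -/
import Mathlib

section
/- Let R be a ring with unit and A a (not necessarily unital) associative ring. Let σ: R → M_A be a map with σ(1) = 1 (the identity bimultiplication), such that for all x, y ∈ R the bimultiplications σ(x) and σ(y) are permutable and both σ(x+y) − σ(x) − σ(y) and σ(xy) − σ(x)σ(y) are inner bimultiplications. Then the bicenter C_A, with the operations x·c = σ(x)c and c·x = cσ(x) for x ∈ R and c ∈ C_A, is a unital R-bimodule. Moreover this R-bimodule structure is unchanged if σ is replaced by any σ': R → M_A such that σ'(x) − σ(x) is an inner bimultiplication for every x ∈ R. -/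
/-- A bimultiplication of a (not necessarily unital) associative ring `A`:
a pair of maps `a ↦ σa` (`left`) and `a ↦ aσ` (`right`) satisfying
`σ(a+b) = σa + σb`, `(a+b)σ = aσ + bσ`, `σ(ab) = (σa)b`, `(ab)σ = a(bσ)`
and `a(σb) = (aσ)b`. -/
structure Bimul (A : Type*) [NonUnitalRing A] where
  left : A → A
  right : A → A
  left_add : ∀ a b : A, left (a + b) = left a + left b
  right_add : ∀ a b : A, right (a + b) = right a + right b
  left_mul : ∀ a b : A, left (a * b) = left a * b
  right_mul : ∀ a b : A, right (a * b) = a * right b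
  middle : ∀ a b : A, a * left b = right a * b

namespace Bimul

variable {A : Type*} [NonUnitalRing A]

/-- The sum of two bimultiplications: `(σ+ν)a = σa + νa`, `a(σ+ν) = aσ + aν`. -/
instance : Add (Bimul A) :=
  ⟨fun σ ν =>
    { left := fun a => σ.left a + ν.left a
      right := fun a => σ.right a + ν.right a
      left_add := fun a b => by rw [σ.left_add, ν.left_add]; abel
      right_add := fun a b => by rw [σ.right_add, ν.right_add]; abel
      left_mul := fun a b => by rw [σ.left_mul, ν.left_mul, add_mul]
      right_mul := fun a b => by rw [σ.right_mul, ν.right_mul, mul_add]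
      middle := fun a b => by rw [mul_add, add_mul, σ.middle, ν.middle] }⟩

/-- The product of two bimultiplications: `(σν)a = σ(νa)`, `a(σν) = (aσ)ν`. -/
instance : Mul (Bimul A) :=
  ⟨fun σ ν =>
    { left := fun a => σ.left (ν.left a)
      right := fun a => ν.right (σ.right a)
      left_add := fun a b => by rw [ν.left_add, σ.left_add]
      right_add := fun a b => by rw [σ.right_add, ν.right_add]
      left_mul := fun a b => by rw [ν.left_mul, σ.left_mul]
      right_mul := fun a b => by rw [σ.right_mul, ν.right_mul]
      middle := fun a b => by rw [σ.middle, ν.middle] }⟩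

/-- The zero bimultiplication. -/
instance : Zero (Bimul A) :=
  ⟨{ left := fun _ => 0
     right := fun _ => 0
     left_add := fun _ _ => by simp
     right_add := fun _ _ => by simp
     left_mul := fun _ _ => by simp
     right_mul := fun _ _ => by simp
     middle := fun _ _ => by simp }⟩

/-- The negative of a bimultiplication. -/
instance : Neg (Bimul A) :=
  ⟨fun σ =>
    { left := fun a => -σ.left a
      right := fun a => -σ.right a
      left_add := fun a b => by rw [σ.left_add]; abel
      right_add := fun a b => by rw [σ.right_add]; abel
      left_mul := fun a b => by rw [σ.left_mul, neg_mul]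
      right_mul := fun a b => by rw [σ.right_mul, mul_neg]
      middle := fun a b => by rw [mul_neg, neg_mul, σ.middle] }⟩

/-- Difference of bimultiplications. -/
instance : Sub (Bimul A) := ⟨fun σ ν => σ + -ν⟩

/-- The identity bimultiplication, whose left and right actions are the identity map. -/
instance : One (Bimul A) :=
  ⟨{ left := id
     right := id
     left_add := fun _ _ => rfl
     right_add := fun _ _ => rfl
     left_mul := fun _ _ => rfl
     right_mul := fun _ _ => rfl
     middle := fun _ _ => rfl }⟩

/-- The inner bimultiplication `μ_c` determined by `c ∈ A`:
`μ_c a = ca`, `a μ_c = ac`. -/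
def inner (c : A) : Bimul A where
  left a := c * a
  right a := a * c
  left_add a b := mul_add c a b
  right_add a b := add_mul a b c
  left_mul a b := (mul_assoc c a b).symm
  right_mul a b := mul_assoc a b c
  middle a b := (mul_assoc a c b).symm

/-- Two bimultiplications `σ`, `ν` are permutable if `σ(aν) = (σa)ν` and
`ν(aσ) = (νa)σ` for all `a`. -/
def Permutable (σ ν : Bimul A) : Prop :=
  (∀ a : A, σ.left (ν.right a) = ν.right (σ.left a)) ∧
  (∀ a : A, ν.left (σ.right a) = σ.right (ν.left a))

end Bimul

/-- The bicenter of `A`: elements annihilated by multiplication on both sides. -/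
def bicenter (A : Type*) [NonUnitalRing A] : Set A :=
  {c | ∀ a : A, c * a = 0 ∧ a * c = 0}

/-!
Every element of the bicenter is annihilated by `A` on both sides, so every inner
bimultiplication vanishes on `C_A`. The defects `σ(x+y) − σ(x) − σ(y)`, `σ(xy) − σ(x)σ(y)` and
`σ'(x) − σ(x)` are inner, hence the corresponding identities hold exactly on `C_A`; the
compatibility of the two actions is permutability.
-/

section Bicenter

variable {A : Type*} [NonUnitalRing A]

theorem zero_mem_bicenter : (0 : A) ∈ bicenter A :=
  fun a => ⟨zero_mul a, mul_zero a⟩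

theorem add_mem_bicenter {c d : A} (hc : c ∈ bicenter A) (hd : d ∈ bicenter A) :
    c + d ∈ bicenter A := fun a => by
  simp only [add_mul, mul_add, (hc a).1, (hc a).2, (hd a).1, (hd a).2, add_zero, and_self]

theorem neg_mem_bicenter {c : A} (hc : c ∈ bicenter A) : -c ∈ bicenter A := fun a => by
  simp only [neg_mul, mul_neg, (hc a).1, (hc a).2, neg_zero, and_self]

end Bicenter

namespace Bimul

variable {A : Type*} [NonUnitalRing A]

theorem sub_left (σ ν : Bimul A) (a : A) : (σ - ν).left a = σ.left a - ν.left a :=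
  (sub_eq_add_neg _ _).symm

theorem sub_right (σ ν : Bimul A) (a : A) : (σ - ν).right a = σ.right a - ν.right a :=
  (sub_eq_add_neg _ _).symm

theorem left_zero (σ : Bimul A) : σ.left 0 = 0 :=
  (AddMonoidHom.mk' σ.left σ.left_add).map_zero

theorem right_zero (σ : Bimul A) : σ.right 0 = 0 :=
  (AddMonoidHom.mk' σ.right σ.right_add).map_zero

theorem left_mem_bicenter (σ : Bimul A) {c : A} (hc : c ∈ bicenter A) :
    σ.left c ∈ bicenter A := fun a =>
  ⟨by rw [← σ.left_mul, (hc a).1, σ.left_zero], by rw [σ.middle]; exact (hc _).2⟩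

theorem right_mem_bicenter (σ : Bimul A) {c : A} (hc : c ∈ bicenter A) :
    σ.right c ∈ bicenter A := fun a =>
  ⟨by rw [← σ.middle]; exact (hc _).1, by rw [← σ.right_mul, (hc a).2, σ.right_zero]⟩

theorem eq_on_bicenter_of_sub_eq_inner {σ ν : Bimul A} {a : A} (h : σ - ν = inner a)
    {c : A} (hc : c ∈ bicenter A) : σ.left c = ν.left c ∧ σ.right c = ν.right c :=
  ⟨sub_eq_zero.mp <| by rw [← sub_left, h]; exact (hc a).2,
    sub_eq_zero.mp <| by rw [← sub_right, h]; exact (hc a).1⟩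

end Bimul

/-- Let `R` be a ring with unit and `A` a (not necessarily
unital) associative ring, and let `σ : R → M_A` be a map with `σ(1) = 1` such
that all `σ(x)`, `σ(y)` are permutable and `σ(x+y) − σ(x) − σ(y)` and
`σ(xy) − σ(x)σ(y)` are inner.  Then the bicenter `C_A`, with the operations
`x·c = σ(x)c` and `c·x = cσ(x)`, is a unital `R`-bimodule, and this bimodule
structure is unchanged if `σ` is replaced by any `σ'` with `σ'(x) − σ(x)`
inner for every `x`. -/
theorem bicenter_bimodule (R A : Type*) [Ring R] [NonUnitalRing A]
    (σ : R → Bimul A) (hone : σ 1 = 1)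
    (hperm : ∀ x y : R, Bimul.Permutable (σ x) (σ y))
    (hadd : ∀ x y : R, ∃ a : A, σ (x + y) - σ x - σ y = Bimul.inner a)
    (hmul : ∀ x y : R, ∃ a : A, σ (x * y) - σ x * σ y = Bimul.inner a) :
    -- the bicenter is an abelian group under the addition of `A`
    ((0 : A) ∈ bicenter A ∧
      (∀ c ∈ bicenter A, ∀ d ∈ bicenter A, c + d ∈ bicenter A) ∧
      (∀ c ∈ bicenter A, -c ∈ bicenter A)) ∧
    -- the actions preserve the bicenter
    (∀ (x : R), ∀ c ∈ bicenter A, (σ x).left c ∈ bicenter A ∧ (σ x).right c ∈ bicenter A) ∧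
    -- additivity in the module variable
    (∀ (x : R), ∀ c ∈ bicenter A, ∀ d ∈ bicenter A,
      (σ x).left (c + d) = (σ x).left c + (σ x).left d ∧
      (σ x).right (c + d) = (σ x).right c + (σ x).right d) ∧
    -- additivity in the ring variable
    (∀ (x y : R), ∀ c ∈ bicenter A,
      (σ (x + y)).left c = (σ x).left c + (σ y).left c ∧
      (σ (x + y)).right c = (σ x).right c + (σ y).right c) ∧
    -- unitality
    (∀ c ∈ bicenter A, (σ 1).left c = c ∧ (σ 1).right c = c) ∧
    -- associativity of the two actions
    (∀ (x y : R), ∀ c ∈ bicenter A,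
      (σ (x * y)).left c = (σ x).left ((σ y).left c) ∧
      (σ (x * y)).right c = (σ y).right ((σ x).right c)) ∧
    -- compatibility of the left and the right action: (x·c)·y = x·(c·y)
    (∀ (x y : R), ∀ c ∈ bicenter A,
      (σ y).right ((σ x).left c) = (σ x).left ((σ y).right c)) ∧
    -- invariance under change of σ modulo inner bimultiplications
    (∀ σ' : R → Bimul A, (∀ x : R, ∃ a : A, σ' x - σ x = Bimul.inner a) →
      ∀ (x : R), ∀ c ∈ bicenter A,
        (σ' x).left c = (σ x).left c ∧ (σ' x).right c = (σ x).right c) := by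
  refine ⟨⟨zero_mem_bicenter, fun c hc d hd => add_mem_bicenter hc hd,
      fun c hc => neg_mem_bicenter hc⟩,
    fun x c hc => ⟨(σ x).left_mem_bicenter hc, (σ x).right_mem_bicenter hc⟩,
    fun x c _ d _ => ⟨(σ x).left_add c d, (σ x).right_add c d⟩,
    fun x y c hc => ?_, fun c _ => by rw [hone]; exact ⟨rfl, rfl⟩,
    fun x y c hc => ?_, fun x y c _ => ((hperm x y).1 c).symm,
    fun σ' hσ' x c hc => ?_⟩
  · obtain ⟨a, h⟩ := hadd x y
    obtain ⟨hl, hr⟩ := Bimul.eq_on_bicenter_of_sub_eq_inner h hc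
    rw [Bimul.sub_left, sub_eq_iff_eq_add'] at hl
    rw [Bimul.sub_right, sub_eq_iff_eq_add'] at hr
    exact ⟨hl, hr⟩
  · obtain ⟨a, h⟩ := hmul x y
    exact Bimul.eq_on_bicenter_of_sub_eq_inner h hc
  · obtain ⟨a, h⟩ := hσ' x
    exact Bimul.eq_on_bicenter_of_sub_eq_inner h hc
end

section
/- Let R be a ring with unit and A a (not necessarily unital) associative ring. Let σ: R → M_A be a map with σ(0) = 0 and σ(1) = 1 (the identity bimultiplication), such that σ(x) and σ(y) are permutable for all x, y ∈ R, and let f, g: R × R → A be maps with f(x,0) = f(0,x) = 0, g(x,0) = g(0,x) = 0, g(x,1) = g(1,x) = 0, satisfying σ(x+y) − σ(x) − σ(y) = μ_{f(x,y)} and σ(xy) − σ(x)σ(y) = μ_{g(x,y)} in M_A for all x, y ∈ R. Then every value of the obstruction of (σ, f, g), i.e. each of the elements ζ(x,y,z), η(x,y), α(x,y,z), λ(x,y,z), ρ(x,y,z) for x, y, z ∈ R, lies in the bicenter C_A of A. -/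
section Obstruction

variable {R A : Type*} [Ring R] [NonUnitalRing A]

/-- `ζ(x,y,z) = f(y,z) − f(x+y,z) + f(x,y+z) − f(x,y)`. -/
def obsζ (f : R → R → A) (x y z : R) : A :=
  f y z - f (x + y) z + f x (y + z) - f x y

/-- `η(x,y) = f(x,y) − f(y,x)`. -/
def obsη (f : R → R → A) (x y : R) : A :=
  f x y - f y x

/-- `α(x,y,z) = σ(x)g(y,z) − g(xy,z) + g(x,yz) − g(x,y)σ(z)`. -/
def obsα (σ : R → Bimul A) (g : R → R → A) (x y z : R) : A :=
  (σ x).left (g y z) - g (x * y) z + g x (y * z) - (σ z).right (g x y)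

/-- `λ(x,y,z) = σ(x)f(y,z) − f(xy,xz) + g(x,y+z) − g(x,y) − g(x,z)`. -/
def obsl (σ : R → Bimul A) (f g : R → R → A) (x y z : R) : A :=
  (σ x).left (f y z) - f (x * y) (x * z) + g x (y + z) - g x y - g x z

/-- `ρ(x,y,z) = f(x,y)σ(z) − f(xz,yz) + g(x+y,z) − g(x,z) − g(y,z)`. -/
def obsρ (σ : R → Bimul A) (f g : R → R → A) (x y z : R) : A :=
  (σ z).right (f x y) - f (x * z) (y * z) + g (x + y) z - g x z - g y z

end Obstruction

namespace Bimul

variable {A : Type*} [NonUnitalRing A]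

/-- The right action is recorded in the opposite ring, so that `toEnd` is multiplicative. -/
def toEnd (σ : Bimul A) : AddMonoid.End A × (AddMonoid.End A)ᵐᵒᵖ :=
  (AddMonoidHom.mk' σ.left σ.left_add, MulOpposite.op (AddMonoidHom.mk' σ.right σ.right_add))

@[simp]
theorem toEnd_add (σ ν : Bimul A) : (σ + ν).toEnd = σ.toEnd + ν.toEnd := rfl

@[simp]
theorem toEnd_neg (σ : Bimul A) : (-σ).toEnd = -σ.toEnd := rfl

@[simp]
theorem toEnd_sub (σ ν : Bimul A) : (σ - ν).toEnd = σ.toEnd - ν.toEnd := by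
  rw [sub_eq_add_neg, ← toEnd_neg, ← toEnd_add]; rfl

@[simp]
theorem toEnd_mul (σ ν : Bimul A) : (σ * ν).toEnd = σ.toEnd * ν.toEnd := rfl

def innerEnd : A →+ AddMonoid.End A × (AddMonoid.End A)ᵐᵒᵖ :=
  AddMonoid.End.mulLeft.prod (MulOpposite.opAddEquiv.toAddMonoidHom.comp AddMonoid.End.mulRight)

theorem toEnd_inner (c : A) : (inner c).toEnd = innerEnd c := rfl

theorem innerEnd_left (σ : Bimul A) (c : A) : innerEnd (σ.left c) = σ.toEnd * innerEnd c := by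
  refine Prod.ext ?_ (MulOpposite.unop_injective ?_) <;> ext b
  · exact (σ.left_mul c b).symm
  · exact σ.middle b c

theorem innerEnd_right (σ : Bimul A) (c : A) : innerEnd (σ.right c) = innerEnd c * σ.toEnd := by
  refine Prod.ext ?_ (MulOpposite.unop_injective ?_) <;> ext b
  · exact (σ.middle c b).symm
  · exact (σ.right_mul b c).symm

theorem innerEnd_eq_zero_iff {c : A} : innerEnd c = 0 ↔ c ∈ bicenter A := by
  simp only [innerEnd, AddMonoidHom.prod_apply, AddMonoidHom.comp_apply, Prod.mk_eq_zero,
    AddEquiv.coe_toAddMonoidHom, MulOpposite.opAddEquiv_apply, MulOpposite.op_eq_zero_iff,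
    DFunLike.ext_iff, AddMonoid.End.zero_apply, ← forall_and]
  rfl

end Bimul

section Representation

variable {R A M : Type*} [Ring R] [NonUnitalRing A]

theorem map_obsζ [AddCommGroup M] {f : R → R → A} (Φ : A →+ M) (s : R → M)
    (hf : ∀ p q, Φ (f p q) = s (p + q) - s p - s q) (x y z : R) :
    Φ (obsζ f x y z) = 0 := by
  simp only [obsζ, map_sub, map_add, hf, add_assoc]
  abel

theorem map_obsη [AddCommGroup M] {f : R → R → A} (Φ : A →+ M) (s : R → M)
    (hf : ∀ p q, Φ (f p q) = s (p + q) - s p - s q) (x y : R) :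
    Φ (obsη f x y) = 0 := by
  simp only [obsη, map_sub, hf, add_comm y x]
  abel

variable [Ring M] {σ : R → Bimul A} {f g : R → R → A} (Φ : A →+ M) (s : R → M)

theorem map_obsα (hg : ∀ p q, Φ (g p q) = s (p * q) - s p * s q)
    (hl : ∀ p c, Φ ((σ p).left c) = s p * Φ c) (hr : ∀ p c, Φ ((σ p).right c) = Φ c * s p)
    (x y z : R) : Φ (obsα σ g x y z) = 0 := by
  simp only [obsα, map_sub, map_add, hg, hl, hr, mul_assoc]
  noncomm_ring

theorem map_obsl (hf : ∀ p q, Φ (f p q) = s (p + q) - s p - s q)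
    (hg : ∀ p q, Φ (g p q) = s (p * q) - s p * s q)
    (hl : ∀ p c, Φ ((σ p).left c) = s p * Φ c) (x y z : R) :
    Φ (obsl σ f g x y z) = 0 := by
  simp only [obsl, map_sub, map_add, hf, hg, hl, mul_add]
  noncomm_ring

theorem map_obsρ (hf : ∀ p q, Φ (f p q) = s (p + q) - s p - s q)
    (hg : ∀ p q, Φ (g p q) = s (p * q) - s p * s q)
    (hr : ∀ p c, Φ ((σ p).right c) = Φ c * s p) (x y z : R) :
    Φ (obsρ σ f g x y z) = 0 := by
  simp only [obsρ, map_sub, map_add, hf, hg, hr, add_mul]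
  noncomm_ring

end Representation

theorem obstruction_mem_bicenter_general (R A : Type*) [Ring R] [NonUnitalRing A]
    (σ : R → Bimul A) (f g : R → R → A)
    (hadd : ∀ x y : R, σ (x + y) - σ x - σ y = Bimul.inner (f x y))
    (hmul : ∀ x y : R, σ (x * y) - σ x * σ y = Bimul.inner (g x y)) :
    ∀ x y z : R,
      obsζ f x y z ∈ bicenter A ∧
      obsη f x y ∈ bicenter A ∧
      obsα σ g x y z ∈ bicenter A ∧
      obsl σ f g x y z ∈ bicenter A ∧
      obsρ σ f g x y z ∈ bicenter A := by
  let s p := (σ p).toEnd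
  have hf : ∀ p q, Bimul.innerEnd (f p q) = s (p + q) - s p - s q := fun p q => by
    rw [← Bimul.toEnd_inner, ← hadd, Bimul.toEnd_sub, Bimul.toEnd_sub]
  have hg : ∀ p q, Bimul.innerEnd (g p q) = s (p * q) - s p * s q := fun p q => by
    rw [← Bimul.toEnd_inner, ← hmul, Bimul.toEnd_sub, Bimul.toEnd_mul]
  have hl : ∀ p c, Bimul.innerEnd ((σ p).left c) = s p * Bimul.innerEnd c :=
    fun p => (σ p).innerEnd_left
  have hr : ∀ p c, Bimul.innerEnd ((σ p).right c) = Bimul.innerEnd c * s p :=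
    fun p => (σ p).innerEnd_right
  intro x y z
  simp only [← Bimul.innerEnd_eq_zero_iff]
  exact ⟨map_obsζ _ s hf x y z, map_obsη _ s hf x y, map_obsα _ s hg hl hr x y z,
    map_obsl _ s hf hg hl x y z, map_obsρ _ s hf hg hr x y z⟩

/-- Under the stated hypotheses on `σ`, `f`, `g`, every value of
the obstruction `(ζ, η, α, λ, ρ)` of `(σ, f, g)` lies in the bicenter `C_A`. -/
theorem obstruction_mem_bicenter (R A : Type*) [Ring R] [NonUnitalRing A]
    (σ : R → Bimul A) (f g : R → R → A)
    (hzero : σ 0 = 0) (hone : σ 1 = 1)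
    (hperm : ∀ x y : R, Bimul.Permutable (σ x) (σ y))
    (hf0 : ∀ x : R, f x 0 = 0 ∧ f 0 x = 0)
    (hg0 : ∀ x : R, g x 0 = 0 ∧ g 0 x = 0)
    (hg1 : ∀ x : R, g x 1 = 0 ∧ g 1 x = 0)
    (hadd : ∀ x y : R, σ (x + y) - σ x - σ y = Bimul.inner (f x y))
    (hmul : ∀ x y : R, σ (x * y) - σ x * σ y = Bimul.inner (g x y)) :
    ∀ x y z : R,
      obsζ f x y z ∈ bicenter A ∧
      obsη f x y ∈ bicenter A ∧
      obsα σ g x y z ∈ bicenter A ∧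
      obsl σ f g x y z ∈ bicenter A ∧
      obsρ σ f g x y z ∈ bicenter A :=
  obstruction_mem_bicenter_general R A σ f g hadd hmul
end

section
/- Let R be a ring with unit and A a (not necessarily unital) associative ring. Let σ: R → M_A be a map with σ(0) = 0 and σ(1) = 1 (the identity bimultiplication), such that σ(x) and σ(y) are permutable for all x, y ∈ R, and let f, g: R × R → A be maps with f(x,0) = f(0,x) = 0, g(x,0) = g(0,x) = 0, g(x,1) = g(1,x) = 0, satisfying σ(x+y) − σ(x) − σ(y) = μ_{f(x,y)} and σ(xy) − σ(x)σ(y) = μ_{g(x,y)} in M_A for all x, y ∈ R. Then the obstruction (ζ, η, α, λ, ρ) of (σ, f, g) takes values in the bicenter C_A, satisfies η(x,x) = 0 for all x ∈ R, and, with respect to the R-bimodule structure on C_A given by x·c = σ(x)c and c·x = cσ(x), satisfies all the relations (R1)–(R17); that is, the obstruction is a family of natural equivalences of an Ann-category of type (R, C_A). -/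
/-- The relations (R1)–(R17) satisfied by the family of natural equivalences
`(ξ, η, α, λ, ρ)` of an Ann-category of type `(R, M)`, stated relative to a
left action `hL : R → M → M`, `(x, m) ↦ x·m` and a right action
`hR : M → R → M`, `(m, x) ↦ m·x`. -/
def AnnRelations {R M : Type*} [Ring R] [AddCommGroup M]
    (hL : R → M → M) (hR : M → R → M)
    (ξ : R → R → R → M) (η : R → R → M) (α lam ρ : R → R → R → M) : Prop :=
  -- (R1)
  (∀ x y z t : R,
    ξ y z t - ξ (x + y) z t + ξ x (y + z) t - ξ x y (z + t) + ξ x y z = 0) ∧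
  -- (R2)
  (∀ x y z t : R, ξ 0 y z = 0 ∧ ξ x 0 t = 0 ∧ ξ x y 0 = 0) ∧
  -- (R3)
  (∀ x y z : R,
    ξ x y z - ξ x z y + ξ z x y - η x z + η (x + y) z - η y z = 0) ∧
  -- (R4)
  (∀ x y : R, η x y + η y x = 0) ∧
  -- (R5)
  (∀ x y z : R, hL x (η y z) - η (x * y) (x * z) = lam x y z - lam x z y) ∧
  -- (R6)
  (∀ x y z : R, hR (η x y) z - η (x * z) (y * z) = ρ x y z - ρ y x z) ∧
  -- (R7)
  (∀ x y z t : R,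
    hL x (ξ y z t) - ξ (x * y) (x * z) (x * t) =
      lam x z t - lam x (y + z) t + lam x y (z + t) - lam x y z) ∧
  -- (R8)
  (∀ x y z t : R,
    hR (ξ x y z) t - ξ (x * t) (y * t) (z * t) =
      ρ y z t - ρ (x + y) z t + ρ x (y + z) t - ρ x y t) ∧
  -- (R9)
  (∀ x y z t : R,
    ρ x y (z + t) - ρ x y z - ρ x y t + lam x z t + lam y z t - lam (x + y) z t =
      -ξ (x * z + x * t) (y * z) (y * t) + ξ (x * z) (x * t) (y * z) -
        η (x * t) (y * z) + ξ (x * z + y * z) (x * t) (y * t) -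
        ξ (x * z) (y * z) (x * t)) ∧
  -- (R10)
  (∀ x y z t : R,
    α x y (z + t) - α x y z - α x y t =
      hL x (lam y z t) + lam x (y * z) (y * t) - lam (x * y) z t) ∧
  -- (R11)
  (∀ x y z t : R,
    α x (y + z) t - α x y t - α x z t =
      hL x (ρ y z t) - ρ (x * y) (x * z) t + lam x (y * t) (z * t) -
        hR (lam x y z) t) ∧
  -- (R12)
  (∀ x y z t : R,
    α (x + y) z t - α x z t - α y z t =
      -hR (ρ x y z) t - ρ (x * z) (y * z) t + ρ x y (z * t)) ∧
  -- (R13)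
  (∀ x y z t : R,
    hL x (α y z t) - α (x * y) z t + α x (y * z) t - α x y (z * t) +
      hR (α x y z) t = 0) ∧
  -- (R14)
  (∀ x y z : R, α 1 y z = 0 ∧ α x 1 z = 0 ∧ α x y 1 = 0) ∧
  -- (R15)
  (∀ x y z t : R, α 0 y z = 0 ∧ α x 0 t = 0 ∧ α x y 0 = 0) ∧
  -- (R16)
  (∀ x y z : R, lam 1 y z = 0 ∧ lam 0 y z = 0 ∧ lam x 0 z = 0 ∧ lam x y 0 = 0) ∧
  -- (R17)
  (∀ x y z : R, ρ x y 1 = 0 ∧ ρ 0 y z = 0 ∧ ρ x 0 z = 0 ∧ ρ x y 0 = 0)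

/-!
Evaluated at an element `a`, the hypotheses say `σ(x+y)a = σ(x)a + σ(y)a + f(x,y)a` and
`σ(xy)a = σ(x)(σ(y)a) + g(x,y)a`, and symmetrically on the right. Read backwards, they express
the products of `a` with values of `f` and `g` through the `σ`'s, so multiplying an obstruction
by `a` gives a telescoping sum: the obstruction lies in the bicenter. Read forwards, they expand
`σ` at sums and products; (R9), (R10), (R12) and (R13) follow by expanding both sides, where the
quadratic terms `f·f`, `g·f`, `f·g`, `g·g` cancel in pairs. Permutability, which moves `σ(x)`
acting on the left past `σ(t)` acting on the right, is what (R11) and (R13) need.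
-/

namespace Bimul

variable {A : Type*} [NonUnitalRing A]

def leftHom (σ : Bimul A) : A →+ A := AddMonoidHom.mk' σ.left σ.left_add

def rightHom (σ : Bimul A) : A →+ A := AddMonoidHom.mk' σ.right σ.right_add

theorem left_sub (σ : Bimul A) (a b : A) : σ.left (a - b) = σ.left a - σ.left b :=
  map_sub σ.leftHom a b

theorem right_sub (σ : Bimul A) (a b : A) : σ.right (a - b) = σ.right a - σ.right b :=
  map_sub σ.rightHom a b

@[simp] theorem zero_left (a : A) : (0 : Bimul A).left a = 0 := rfl

@[simp] theorem zero_right (a : A) : (0 : Bimul A).right a = 0 := rfl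

@[simp] theorem one_left (a : A) : (1 : Bimul A).left a = a := rfl

@[simp] theorem one_right (a : A) : (1 : Bimul A).right a = a := rfl

theorem mul_left (σ ν : Bimul A) (a : A) : (σ * ν).left a = σ.left (ν.left a) := rfl

theorem mul_right (σ ν : Bimul A) (a : A) : (σ * ν).right a = ν.right (σ.right a) := rfl

theorem inner_left (c a : A) : (inner c).left a = c * a := rfl

theorem inner_right (c a : A) : (inner c).right a = a * c := rfl

end Bimul

namespace Obstruction

open Bimul

variable {R A : Type*} [Ring R] [NonUnitalRing A] {σ : R → Bimul A} {f g : R → R → A}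

variable (hadd : ∀ x y : R, σ (x + y) - σ x - σ y = Bimul.inner (f x y))
variable (hmul : ∀ x y : R, σ (x * y) - σ x * σ y = Bimul.inner (g x y))
variable (hperm : ∀ x y : R, Bimul.Permutable (σ x) (σ y))

section Expansion

include hadd in
theorem add_defect_mul (x y : R) (a : A) :
    f x y * a = (σ (x + y)).left a - (σ x).left a - (σ y).left a := by
  simpa only [sub_left, inner_left] using (congrArg (fun τ => τ.left a) (hadd x y)).symm

include hadd in
theorem mul_add_defect (x y : R) (a : A) :
    a * f x y = (σ (x + y)).right a - (σ x).right a - (σ y).right a := by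
  simpa only [sub_right, inner_right] using (congrArg (fun τ => τ.right a) (hadd x y)).symm

include hmul in
theorem mul_defect_mul (x y : R) (a : A) :
    g x y * a = (σ (x * y)).left a - (σ x).left ((σ y).left a) := by
  simpa only [sub_left, mul_left, inner_left] using
    (congrArg (fun τ => τ.left a) (hmul x y)).symm

include hmul in
theorem mul_mul_defect (x y : R) (a : A) :
    a * g x y = (σ (x * y)).right a - (σ y).right ((σ x).right a) := by
  simpa only [sub_right, mul_right, inner_right] using
    (congrArg (fun τ => τ.right a) (hmul x y)).symm

include hadd in
theorem left_map_add (x y : R) (a : A) :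
    (σ (x + y)).left a = (σ x).left a + (σ y).left a + f x y * a := by
  rw [add_defect_mul hadd]; abel

include hadd in
theorem right_map_add (x y : R) (a : A) :
    (σ (x + y)).right a = (σ x).right a + (σ y).right a + a * f x y := by
  rw [mul_add_defect hadd]; abel

include hmul in
theorem left_map_mul (x y : R) (a : A) :
    (σ (x * y)).left a = (σ x).left ((σ y).left a) + g x y * a := by
  rw [mul_defect_mul hmul]; abel

include hmul in
theorem right_map_mul (x y : R) (a : A) :
    (σ (x * y)).right a = (σ y).right ((σ x).right a) + a * g x y := by
  rw [mul_mul_defect hmul]; abel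

end Expansion

section Bicenter

include hadd in
theorem obsζ_mem_bicenter (x y z : R) : obsζ f x y z ∈ bicenter A := fun a => by
  constructor
  · simp only [obsζ, sub_mul, add_mul, add_defect_mul hadd, add_assoc]
    abel
  · simp only [obsζ, mul_sub, mul_add, mul_add_defect hadd, add_assoc]
    abel

include hadd in
theorem obsη_mem_bicenter (x y : R) : obsη f x y ∈ bicenter A := fun a => by
  constructor
  · simp only [obsη, sub_mul, add_defect_mul hadd, add_comm y x]
    abel
  · simp only [obsη, mul_sub, mul_add_defect hadd, add_comm y x]
    abel

include hmul in
theorem obsα_mem_bicenter (x y z : R) : obsα σ g x y z ∈ bicenter A := fun a => by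
  constructor
  · simp only [obsα, sub_mul, add_mul, ← Bimul.left_mul, ← Bimul.middle,
      mul_defect_mul hmul, left_sub, mul_assoc]
    abel
  · simp only [obsα, mul_sub, mul_add, ← Bimul.right_mul, Bimul.middle,
      mul_mul_defect hmul, right_sub, mul_assoc]
    abel

include hadd hmul in
theorem obsl_mem_bicenter (x y z : R) : obsl σ f g x y z ∈ bicenter A := fun a => by
  constructor
  · simp only [obsl, sub_mul, add_mul, ← Bimul.left_mul, add_defect_mul hadd,
      mul_defect_mul hmul, left_sub, mul_add]
    abel
  · simp only [obsl, mul_sub, mul_add, Bimul.middle, mul_add_defect hadd, mul_mul_defect hmul]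
    abel

include hadd hmul in
theorem obsρ_mem_bicenter (x y z : R) : obsρ σ f g x y z ∈ bicenter A := fun a => by
  constructor
  · simp only [obsρ, sub_mul, add_mul, ← Bimul.middle, add_defect_mul hadd, mul_defect_mul hmul]
    abel
  · simp only [obsρ, mul_sub, mul_add, ← Bimul.right_mul, mul_add_defect hadd,
      mul_mul_defect hmul, right_sub, add_mul]
    abel

end Bicenter

section Relations

omit [Ring R] in
theorem obsη_self (x : R) : obsη f x x = 0 := sub_self _

omit [Ring R] in
theorem obsη_add_obsη_swap (x y : R) : obsη f x y + obsη f y x = 0 := by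
  simp only [obsη]; abel

theorem obsζ_cocycle (x y z t : R) :
    obsζ f y z t - obsζ f (x + y) z t + obsζ f x (y + z) t - obsζ f x y (z + t) +
      obsζ f x y z = 0 := by
  simp only [obsζ, add_assoc]; abel

theorem obsζ_obsη_hexagon (x y z : R) :
    obsζ f x y z - obsζ f x z y + obsζ f z x y - obsη f x z + obsη f (x + y) z -
      obsη f y z = 0 := by
  simp only [obsζ, obsη, add_comm z y, add_comm z x]; abel

theorem obsη_obsl_compat (x y z : R) :
    (σ x).left (obsη f y z) - obsη f (x * y) (x * z) =
      obsl σ f g x y z - obsl σ f g x z y := by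
  simp only [obsη, obsl, left_sub, add_comm z y]; abel

theorem obsη_obsρ_compat (x y z : R) :
    (σ z).right (obsη f x y) - obsη f (x * z) (y * z) =
      obsρ σ f g x y z - obsρ σ f g y x z := by
  simp only [obsη, obsρ, right_sub, add_comm y x]; abel

theorem obsζ_obsl_compat (x y z t : R) :
    (σ x).left (obsζ f y z t) - obsζ f (x * y) (x * z) (x * t) =
      obsl σ f g x z t - obsl σ f g x (y + z) t + obsl σ f g x y (z + t) -
        obsl σ f g x y z := by
  simp only [obsζ, obsl, left_sub, Bimul.left_add, mul_add, add_assoc]; abel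

theorem obsζ_obsρ_compat (x y z t : R) :
    (σ t).right (obsζ f x y z) - obsζ f (x * t) (y * t) (z * t) =
      obsρ σ f g y z t - obsρ σ f g (x + y) z t + obsρ σ f g x (y + z) t -
        obsρ σ f g x y t := by
  simp only [obsζ, obsρ, right_sub, Bimul.right_add, add_mul, add_assoc]; abel

include hadd in
theorem obsρ_obsl_compat (x y z t : R) :
    obsρ σ f g x y (z + t) - obsρ σ f g x y z - obsρ σ f g x y t + obsl σ f g x z t +
        obsl σ f g y z t - obsl σ f g (x + y) z t =
      -obsζ f (x * z + x * t) (y * z) (y * t) + obsζ f (x * z) (x * t) (y * z) -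
        obsη f (x * t) (y * z) + obsζ f (x * z + y * z) (x * t) (y * t) -
        obsζ f (x * z) (y * z) (x * t) := by
  simp only [obsζ, obsη, obsρ, obsl, left_map_add hadd, right_map_add hadd, mul_add, add_mul,
    add_assoc]
  abel_nf

include hadd hmul in
theorem obsα_obsl_compat (x y z t : R) :
    obsα σ g x y (z + t) - obsα σ g x y z - obsα σ g x y t =
      (σ x).left (obsl σ f g y z t) + obsl σ f g x (y * z) (y * t) -
        obsl σ f g (x * y) z t := by
  simp only [obsα, obsl, right_map_add hadd, left_map_mul hmul, left_sub, Bimul.left_add,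
    mul_add, mul_assoc, add_assoc]
  abel

include hperm in
theorem obsα_obsρ_obsl_compat (x y z t : R) :
    obsα σ g x (y + z) t - obsα σ g x y t - obsα σ g x z t =
      (σ x).left (obsρ σ f g y z t) - obsρ σ f g (x * y) (x * z) t +
        obsl σ f g x (y * t) (z * t) - (σ t).right (obsl σ f g x y z) := by
  simp only [obsα, obsl, obsρ, left_sub, right_sub, Bimul.left_add, Bimul.right_add,
    (hperm _ _).1, mul_add, add_mul, mul_assoc]
  abel

include hadd hmul in
theorem obsα_obsρ_compat (x y z t : R) :
    obsα σ g (x + y) z t - obsα σ g x z t - obsα σ g y z t =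
      -(σ t).right (obsρ σ f g x y z) - obsρ σ f g (x * z) (y * z) t +
        obsρ σ f g x y (z * t) := by
  simp only [obsα, obsρ, left_map_add hadd, right_map_mul hmul, right_sub, Bimul.right_add,
    add_mul, mul_assoc, add_assoc]
  abel

include hmul hperm in
theorem obsα_cocycle (x y z t : R) :
    (σ x).left (obsα σ g y z t) - obsα σ g (x * y) z t + obsα σ g x (y * z) t -
      obsα σ g x y (z * t) + (σ t).right (obsα σ g x y z) = 0 := by
  simp only [obsα, left_map_mul hmul, right_map_mul hmul, left_sub, right_sub, Bimul.left_add,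
    Bimul.right_add, (hperm _ _).1, mul_assoc]
  abel

end Relations

section Normalization

variable (hzero : σ 0 = 0) (hone : σ 1 = 1)
variable (hf0 : ∀ x : R, f x 0 = 0 ∧ f 0 x = 0)
variable (hg0 : ∀ x : R, g x 0 = 0 ∧ g 0 x = 0)
variable (hg1 : ∀ x : R, g x 1 = 0 ∧ g 1 x = 0)

include hf0 in
theorem obsζ_normalized (x y z t : R) :
    obsζ f 0 y z = 0 ∧ obsζ f x 0 t = 0 ∧ obsζ f x y 0 = 0 := by
  simp [obsζ, hf0]

include hone hg1 in
theorem obsα_one (x y z : R) :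
    obsα σ g 1 y z = 0 ∧ obsα σ g x 1 z = 0 ∧ obsα σ g x y 1 = 0 := by
  simp [obsα, hone, hg1, left_zero, right_zero]

include hzero hg0 in
theorem obsα_zero (x y z t : R) :
    obsα σ g 0 y z = 0 ∧ obsα σ g x 0 t = 0 ∧ obsα σ g x y 0 = 0 := by
  simp [obsα, hzero, hg0, left_zero, right_zero]

include hzero hone hf0 hg0 hg1 in
theorem obsl_normalized (x y z : R) :
    obsl σ f g 1 y z = 0 ∧ obsl σ f g 0 y z = 0 ∧ obsl σ f g x 0 z = 0 ∧
      obsl σ f g x y 0 = 0 := by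
  simp [obsl, hzero, hone, hf0, hg0, hg1, left_zero]

include hzero hone hf0 hg0 hg1 in
theorem obsρ_normalized (x y z : R) :
    obsρ σ f g x y 1 = 0 ∧ obsρ σ f g 0 y z = 0 ∧ obsρ σ f g x 0 z = 0 ∧
      obsρ σ f g x y 0 = 0 := by
  simp [obsρ, hzero, hone, hf0, hg0, hg1, right_zero]

end Normalization

end Obstruction

/-- Under the stated hypotheses on `σ`, `f`, `g`, the
obstruction `(ζ, η, α, λ, ρ)` of `(σ, f, g)` takes values in the bicenter
`C_A`, satisfies `η(x,x) = 0`, and satisfies the relations (R1)–(R17) with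
respect to the `R`-bimodule structure `x·c = σ(x)c`, `c·x = cσ(x)` on `C_A`:
it is a family of natural equivalences of an Ann-category of type `(R, C_A)`. -/
theorem obstruction_is_ann_structure (R A : Type*) [Ring R] [NonUnitalRing A]
    (σ : R → Bimul A) (f g : R → R → A)
    (hzero : σ 0 = 0) (hone : σ 1 = 1)
    (hperm : ∀ x y : R, Bimul.Permutable (σ x) (σ y))
    (hf0 : ∀ x : R, f x 0 = 0 ∧ f 0 x = 0)
    (hg0 : ∀ x : R, g x 0 = 0 ∧ g 0 x = 0)
    (hg1 : ∀ x : R, g x 1 = 0 ∧ g 1 x = 0)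
    (hadd : ∀ x y : R, σ (x + y) - σ x - σ y = Bimul.inner (f x y))
    (hmul : ∀ x y : R, σ (x * y) - σ x * σ y = Bimul.inner (g x y)) :
    (∀ x y z : R,
      obsζ f x y z ∈ bicenter A ∧
      obsη f x y ∈ bicenter A ∧
      obsα σ g x y z ∈ bicenter A ∧
      obsl σ f g x y z ∈ bicenter A ∧
      obsρ σ f g x y z ∈ bicenter A) ∧
    (∀ x : R, obsη f x x = 0) ∧
    AnnRelations (fun x c => (σ x).left c) (fun c x => (σ x).right c)
      (obsζ f) (obsη f) (obsα σ g) (obsl σ f g) (obsρ σ f g) := by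
  open Obstruction in
  exact ⟨fun x y z => ⟨obsζ_mem_bicenter hadd x y z, obsη_mem_bicenter hadd x y,
    obsα_mem_bicenter hmul x y z, obsl_mem_bicenter hadd hmul x y z,
    obsρ_mem_bicenter hadd hmul x y z⟩, obsη_self,
    obsζ_cocycle, obsζ_normalized hf0, obsζ_obsη_hexagon, obsη_add_obsη_swap,
    obsη_obsl_compat, obsη_obsρ_compat, obsζ_obsl_compat, obsζ_obsρ_compat,
    obsρ_obsl_compat hadd, obsα_obsl_compat hadd hmul, obsα_obsρ_obsl_compat hperm,
    obsα_obsρ_compat hadd hmul,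
    obsα_cocycle hmul hperm, obsα_one hone hg1, obsα_zero hzero hg0,
    obsl_normalized hzero hone hf0 hg0 hg1, obsρ_normalized hzero hone hf0 hg0 hg1⟩
end

section
/- Let R be a ring with unit and M an R-bimodule. Suppose the functions ξ, α, λ, ρ: R³ → M and η: R² → M satisfy the relations (R1)–(R17), and suppose ξ = 0, λ = 0 and ρ = 0 identically. Then η = 0 identically, and consequently α is a normalized Hochschild 3-cocycle of the ℤ-algebra R with coefficients in M, i.e. α satisfies x·α(y,z,t) − α(xy,z,t) + α(x,yz,t) − α(x,y,zt) + α(x,y,z)·t = 0 and vanishes whenever one of its arguments is 0 or 1. -/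
/-- Let `R` be a ring with unit and `M` an `R`-bimodule.
If `(ξ, η, α, λ, ρ)` satisfies the relations (R1)–(R17) and `ξ = 0`, `λ = 0`,
`ρ = 0` identically, then `η = 0` identically, and consequently `α` is a
normalized Hochschild 3-cocycle of the `ℤ`-algebra `R` with coefficients in
`M`. -/
theorem eta_zero_and_hochschild_cocycle (R M : Type*) [Ring R] [AddCommGroup M]
    [Module R M] [Module Rᵐᵒᵖ M] [SMulCommClass R Rᵐᵒᵖ M]
    (ξ α lam ρ : R → R → R → M) (η : R → R → M)
    (hrel : AnnRelations (fun x m => x • m) (fun m x => MulOpposite.op x • m)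
      ξ η α lam ρ)
    (hξ : ∀ x y z : R, ξ x y z = 0)
    (hlam : ∀ x y z : R, lam x y z = 0)
    (hρ : ∀ x y z : R, ρ x y z = 0) :
    (∀ x y : R, η x y = 0) ∧
    (∀ x y z t : R,
      x • α y z t - α (x * y) z t + α x (y * z) t - α x y (z * t) +
        MulOpposite.op t • α x y z = 0) ∧
    (∀ x y z : R,
      α 1 y z = 0 ∧ α x 1 z = 0 ∧ α x y 1 = 0 ∧
      α 0 y z = 0 ∧ α x 0 z = 0 ∧ α x y 0 = 0) := by
  obtain ⟨h1,h2,h3,h4,h5,h6,h7,h8,h9,h10,h11,h12,h13,h14,h15,h16,h17⟩ := hrel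
  refine ⟨fun x y => ?_, fun x y z t => h13 x y z t, fun x y z =>
    ⟨(h14 x y z).1, (h14 x y z).2.1, (h14 x y z).2.2,
     (h15 x y z z).1, (h15 x y z z).2.1, (h15 x y z z).2.2⟩⟩
  have := h9 x y 1 1
  simp only [hξ, hlam, hρ, mul_one, sub_zero, add_zero, zero_sub, zero_add,
    neg_zero, sub_self, neg_eq_zero] at this
  exact neg_eq_zero.mp this.symm
end

section
/- Let R be a ring with unit, M an R-bimodule, and μ, ν: R × R → M functions satisfying the normalizations μ(x,0) = μ(0,x) = 0, ν(x,0) = ν(0,x) = 0 and ν(1,x) = ν(x,1) = 0 for all x ∈ R. Define ξ(x,y,z) = μ(y,z) − μ(x+y,z) + μ(x,y+z) − μ(x,y); η(x,y) = μ(x,y) − μ(y,x); α(x,y,z) = x·ν(y,z) − ν(xy,z) + ν(x,yz) − ν(x,y)·z; λ(x,y,z) = x·μ(y,z) − μ(xy,xz) + ν(x,y+z) − ν(x,y) − ν(x,z); ρ(x,y,z) = μ(x,y)·z − μ(xz,yz) + ν(x+y,z) − ν(x,z) − ν(y,z). Then the family (ξ, η, α, λ, ρ) satisfies all the relations (R1)–(R17),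 and moreover η(x,x) = 0 for all x ∈ R; that is, the family of natural equivalences determined by a 3-coboundary δ⟨μ,ν⟩ is a family of natural equivalences of a regular Ann-category of type (R, M). -/
section Coboundary

variable {R M : Type*} [Ring R] [AddCommGroup M] [Module R M] [Module Rᵐᵒᵖ M]
  [SMulCommClass R Rᵐᵒᵖ M]

/-- `ξ(x,y,z) = μ(y,z) − μ(x+y,z) + μ(x,y+z) − μ(x,y)`. -/
def cbξ (μ : R → R → M) (x y z : R) : M :=
  μ y z - μ (x + y) z + μ x (y + z) - μ x y

/-- `η(x,y) = μ(x,y) − μ(y,x)`. -/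
def cbη (μ : R → R → M) (x y : R) : M :=
  μ x y - μ y x

/-- `α(x,y,z) = x·ν(y,z) − ν(xy,z) + ν(x,yz) − ν(x,y)·z`. -/
def cbα (ν : R → R → M) (x y z : R) : M :=
  x • ν y z - ν (x * y) z + ν x (y * z) - MulOpposite.op z • ν x y

/-- `λ(x,y,z) = x·μ(y,z) − μ(xy,xz) + ν(x,y+z) − ν(x,y) − ν(x,z)`. -/
def cbl (μ ν : R → R → M) (x y z : R) : M :=
  x • μ y z - μ (x * y) (x * z) + ν x (y + z) - ν x y - ν x z

/-- `ρ(x,y,z) = μ(x,y)·z − μ(xz,yz) + ν(x+y,z) − ν(x,z) − ν(y,z)`. -/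
def cbρ (μ ν : R → R → M) (x y z : R) : M :=
  MulOpposite.op z • μ x y - μ (x * z) (y * z) + ν (x + y) z - ν x z - ν y z

end Coboundary

private lemma cb_smul_comm {R M : Type*} [Ring R] [AddCommGroup M]
    [Module R M] [Module Rᵐᵒᵖ M] [SMulCommClass R Rᵐᵒᵖ M]
    (x t : R) (m : M) :
    x • (MulOpposite.op t • m) = MulOpposite.op t • (x • m) := smul_comm x _ m

set_option maxHeartbeats 2000000 in
/-- For normalized `μ, ν : R × R → M`, the family
`(ξ, η, α, λ, ρ)` determined by the 3-coboundary `δ⟨μ,ν⟩` satisfies the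
relations (R1)–(R17) and `η(x,x) = 0`: it is a family of natural equivalences
of a regular Ann-category of type `(R, M)`. -/
theorem coboundary_is_regular_ann_structure (R M : Type*) [Ring R] [AddCommGroup M]
    [Module R M] [Module Rᵐᵒᵖ M] [SMulCommClass R Rᵐᵒᵖ M]
    (μ ν : R → R → M)
    (hμ0 : ∀ x : R, μ x 0 = 0 ∧ μ 0 x = 0)
    (hν0 : ∀ x : R, ν x 0 = 0 ∧ ν 0 x = 0)
    (hν1 : ∀ x : R, ν 1 x = 0 ∧ ν x 1 = 0) :
    AnnRelations (fun x m => x • m) (fun m x => MulOpposite.op x • m)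
      (cbξ μ) (cbη μ) (cbα ν) (cbl μ ν) (cbρ μ ν) ∧
    (∀ x : R, cbη μ x x = 0) := by
  refine ⟨⟨?_,?_,?_,?_,?_,?_,?_,?_,?_,?_,?_,?_,?_,?_,?_,?_,?_⟩,?_⟩ <;> intros <;>
    simp only [cbξ, cbη, cbα, cbl, cbρ, (hμ0 _).1, (hμ0 _).2, (hν0 _).1, (hν0 _).2,
      (hν1 _).1, (hν1 _).2, mul_add, add_mul, mul_one, one_mul, mul_zero, zero_mul,
      smul_add, smul_sub, one_smul, zero_smul, smul_zero, zero_add, add_zero,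
      MulOpposite.op_one, MulOpposite.op_zero, MulOpposite.op_mul, MulOpposite.op_add,
      mul_smul, add_smul, cb_smul_comm,
      mul_assoc, and_true, true_and, sub_zero, zero_sub, sub_self, eq_self_iff_true] <;>
    abel
end

section
/- Let R be a ring with unit. With B₀, B₁, B₂, ν, d₁, d₂ as defined (with the normalization that any symbol having an entry equal to 0 denotes the zero element), the complex is exact at B₁: the kernel of d₁: B₁ → B₀ equals the image of d₂: B₂ → B₁. -/
/-!
Let `Q = B₁ / im d₂`. The relations killed by `d₂` say exactly that `(x, y) ↦ [x,y] mod im d₂`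
is a symmetric normalized 2-cocycle of `(R, +)` with values in `Q`, so it defines an abelian
extension `E = Q × R` with `(a, x) + (b, y) = (a + b + [x,y], x + y)`. The map `B₀ → E`,
`[x] ↦ (0, x)`, sends `d₁[x,y]` to `([x,y], 0)`; hence `d₁ b = 0` forces the class of `b` in `Q`
to vanish.
-/

open scoped Classical

/-- `Ṙ = R \ {0}`. -/
abbrev Rdot (R : Type*) [Ring R] := {x : R // x ≠ 0}

/-- `B₀ = ℤ(Ṙ)`. -/
abbrev B0 (R : Type*) [Ring R] := FreeAbelianGroup (Rdot R)

/-- `B₁ = ℤ(Ṙ×Ṙ)`. -/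
abbrev B1 (R : Type*) [Ring R] := FreeAbelianGroup (Rdot R × Rdot R)

/-- `B₂ = ℤ(Ṙ×Ṙ×Ṙ) ⊕ ℤ(Ṙ×Ṙ)`. -/
abbrev B2 (R : Type*) [Ring R] :=
  FreeAbelianGroup (Rdot R × Rdot R × Rdot R) × FreeAbelianGroup (Rdot R × Rdot R)

/-- `B₃ = ℤ(Ṙ×Ṙ×Ṙ×Ṙ) ⊕ ℤ(Ṙ×Ṙ×Ṙ) ⊕ ℤ(Ṙ×Ṙ) ⊕ ℤ(Ṙ)`. -/
abbrev B3 (R : Type*) [Ring R] :=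
  FreeAbelianGroup (Rdot R × Rdot R × Rdot R × Rdot R) ×
    (FreeAbelianGroup (Rdot R × Rdot R × Rdot R) ×
      (FreeAbelianGroup (Rdot R × Rdot R) × FreeAbelianGroup (Rdot R)))

variable (R : Type*) [Ring R]

/-- The generator `[x]` of `B₀`, with the normalization `[0] = 0`. -/
noncomputable def br0 (x : R) : B0 R :=
  if h : x = 0 then 0 else FreeAbelianGroup.of ⟨x, h⟩

/-- The generator `[x,y]` of `B₁`, with the normalization that a symbol with an
entry equal to `0` is the zero element. -/
noncomputable def br1 (x y : R) : B1 R :=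
  if hx : x = 0 then 0 else if hy : y = 0 then 0
  else FreeAbelianGroup.of (⟨x, hx⟩, ⟨y, hy⟩)

/-- The generator `[x,y,z]` of `ℤ(Ṙ×Ṙ×Ṙ)`, with the normalization that a symbol
with an entry equal to `0` is the zero element. -/
noncomputable def br2 (x y z : R) : FreeAbelianGroup (Rdot R × Rdot R × Rdot R) :=
  if hx : x = 0 then 0 else if hy : y = 0 then 0 else if hz : z = 0 then 0
  else FreeAbelianGroup.of (⟨x, hx⟩, ⟨y, hy⟩, ⟨z, hz⟩)

/-- `ν : B₀ → R`, `ν[x] = x`. -/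
noncomputable def nuB : B0 R →+ R :=
  FreeAbelianGroup.lift fun x : Rdot R => (x : R)

/-- `d₁ : B₁ → B₀`, `d₁[x,y] = [y] − [x+y] + [x]`. -/
noncomputable def d1 : B1 R →+ B0 R :=
  FreeAbelianGroup.lift fun p : Rdot R × Rdot R =>
    br0 R (p.2 : R) - br0 R ((p.1 : R) + (p.2 : R)) + br0 R (p.1 : R)

/-- `d₂ : B₂ → B₁`; on the first summand
`d₂[x,y,z] = [y,z] − [x+y,z] + [x,y+z] − [x,y]`, and on the second summand
`d₂[x,y] = [x,y] − [y,x]`. -/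
noncomputable def d2 : B2 R →+ B1 R :=
  AddMonoidHom.coprod
    (FreeAbelianGroup.lift fun p : Rdot R × Rdot R × Rdot R =>
      br1 R (p.2.1 : R) (p.2.2 : R) - br1 R ((p.1 : R) + (p.2.1 : R)) (p.2.2 : R) +
        br1 R (p.1 : R) ((p.2.1 : R) + (p.2.2 : R)) - br1 R (p.1 : R) (p.2.1 : R))
    (FreeAbelianGroup.lift fun p : Rdot R × Rdot R =>
      br1 R (p.1 : R) (p.2 : R) - br1 R (p.2 : R) (p.1 : R))

/-- `d₃ : B₃ → B₂`; on the four summands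
`d₃[x,y,z,t] = [y,z,t] − [x+y,z,t] + [x,y+z,t] − [x,y,z+t] + [x,y,z]`,
`d₃[x,y,z] = [x,y,z] − [x,z,y] + [z,x,y] + [x+y,z] − [x,z] − [y,z]`,
`d₃[x,y] = [x,y] + [y,x]`, and `d₃[x] = [x,x]`. -/
noncomputable def d3 : B3 R →+ B2 R :=
  AddMonoidHom.coprod
    (FreeAbelianGroup.lift fun p : Rdot R × Rdot R × Rdot R × Rdot R =>
      (br2 R (p.2.1 : R) (p.2.2.1 : R) (p.2.2.2 : R) -
          br2 R ((p.1 : R) + (p.2.1 : R)) (p.2.2.1 : R) (p.2.2.2 : R) +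
          br2 R (p.1 : R) ((p.2.1 : R) + (p.2.2.1 : R)) (p.2.2.2 : R) -
          br2 R (p.1 : R) (p.2.1 : R) ((p.2.2.1 : R) + (p.2.2.2 : R)) +
          br2 R (p.1 : R) (p.2.1 : R) (p.2.2.1 : R), 0))
    (AddMonoidHom.coprod
      (FreeAbelianGroup.lift fun p : Rdot R × Rdot R × Rdot R =>
        (br2 R (p.1 : R) (p.2.1 : R) (p.2.2 : R) -
            br2 R (p.1 : R) (p.2.2 : R) (p.2.1 : R) +
            br2 R (p.2.2 : R) (p.1 : R) (p.2.1 : R),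
          br1 R ((p.1 : R) + (p.2.1 : R)) (p.2.2 : R) -
            br1 R (p.1 : R) (p.2.2 : R) - br1 R (p.2.1 : R) (p.2.2 : R)))
      (AddMonoidHom.coprod
        (FreeAbelianGroup.lift fun p : Rdot R × Rdot R =>
          ((0 : FreeAbelianGroup (Rdot R × Rdot R × Rdot R)),
            br1 R (p.1 : R) (p.2 : R) + br1 R (p.2 : R) (p.1 : R)))
        (FreeAbelianGroup.lift fun x : Rdot R =>
          ((0 : FreeAbelianGroup (Rdot R × Rdot R × Rdot R)),
            br1 R (x : R) (x : R)))))

structure SymmCocycle (G A : Type*) [AddCommGroup G] [AddCommGroup A] where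
  toFun : G → G → A
  zero_left : ∀ y, toFun 0 y = 0
  symm : ∀ x y, toFun x y = toFun y x
  cocycle : ∀ x y z, toFun y z + toFun x (y + z) = toFun (x + y) z + toFun x y

namespace SymmCocycle

variable {G A : Type*} [AddCommGroup G] [AddCommGroup A]

instance : CoeFun (SymmCocycle G A) fun _ => G → G → A := ⟨toFun⟩

variable (c : SymmCocycle G A)

theorem zero_right (x : G) : c x 0 = 0 := by
  rw [c.symm, c.zero_left]

structure Ext (c : SymmCocycle G A) where
  fst : A
  snd : G

namespace Ext

variable {c}

instance : Add (Ext c) := ⟨fun u v => ⟨u.fst + v.fst + c u.snd v.snd, u.snd + v.snd⟩⟩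

instance : Zero (Ext c) := ⟨⟨0, 0⟩⟩

instance : Neg (Ext c) := ⟨fun u => ⟨-u.fst - c u.snd (-u.snd), -u.snd⟩⟩

theorem mk_add_mk (a b : A) (x y : G) :
    (⟨a, x⟩ + ⟨b, y⟩ : Ext c) = ⟨a + b + c x y, x + y⟩ := rfl

theorem zero_def : (0 : Ext c) = ⟨0, 0⟩ := rfl

theorem neg_mk (a : A) (x : G) : -(⟨a, x⟩ : Ext c) = ⟨-a - c x (-x), -x⟩ := rfl

instance : AddCommGroup (Ext c) where
  add_assoc := by
    rintro ⟨a, x⟩ ⟨b, y⟩ ⟨d, z⟩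
    simp only [mk_add_mk, Ext.mk.injEq, add_assoc x y z, and_true]
    calc a + b + c x y + d + c (x + y) z = a + b + d + (c (x + y) z + c x y) := by abel
      _ = a + (b + d + c y z) + c x (y + z) := by rw [← c.cocycle]; abel
  zero_add := by
    rintro ⟨a, x⟩
    simp [zero_def, mk_add_mk, c.zero_left]
  add_zero := by
    rintro ⟨a, x⟩
    simp [zero_def, mk_add_mk, c.zero_right]
  neg_add_cancel := by
    rintro ⟨a, x⟩
    simp only [neg_mk, mk_add_mk, zero_def, neg_add_cancel, c.symm (-x) x, Ext.mk.injEq, and_true]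
    abel
  add_comm := by
    rintro ⟨a, x⟩ ⟨b, y⟩
    simp only [mk_add_mk, c.symm x y, add_comm a b, add_comm x y]
  nsmul := nsmulRec
  zsmul := zsmulRec

def inlHom : A →+ Ext c where
  toFun a := ⟨a, 0⟩
  map_zero' := rfl
  map_add' a b := by simp [mk_add_mk, c.zero_left]

theorem mk_zero_sub_mk_zero_add_mk_zero (x y : G) :
    (⟨0, y⟩ - ⟨0, x + y⟩ + ⟨0, x⟩ : Ext c) = ⟨c x y, 0⟩ := by
  have h : (⟨0, x⟩ + ⟨0, y⟩ : Ext c) = ⟨c x y, 0⟩ + ⟨0, x + y⟩ := by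
    simp [mk_add_mk, c.zero_left]
  calc (⟨0, y⟩ - ⟨0, x + y⟩ + ⟨0, x⟩ : Ext c) = ⟨0, x⟩ + ⟨0, y⟩ - ⟨0, x + y⟩ := by abel
    _ = ⟨c x y, 0⟩ := by rw [h, add_sub_cancel_right]

end Ext

end SymmCocycle

variable {R}

theorem br0_coe (x : Rdot R) : br0 R x = FreeAbelianGroup.of x := dif_neg x.2

theorem br1_coe (x y : Rdot R) : br1 R x y = FreeAbelianGroup.of (x, y) := by
  simp [br1, x.2, y.2]

theorem br2_coe (x y z : Rdot R) : br2 R x y z = FreeAbelianGroup.of (x, y, z) := by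
  simp [br2, x.2, y.2, z.2]

theorem br0_zero : br0 R 0 = 0 := dif_pos rfl

theorem br1_zero_left (y : R) : br1 R 0 y = 0 := dif_pos rfl

theorem br1_zero_right (x : R) : br1 R x 0 = 0 := by simp [br1]

theorem d1_br1 (x y : R) : d1 R (br1 R x y) = br0 R y - br0 R (x + y) + br0 R x := by
  by_cases hx : x = 0
  · simp [hx, br1_zero_left, br0_zero]
  by_cases hy : y = 0
  · simp [hy, br1_zero_right, br0_zero]
  lift x to Rdot R using hx
  lift y to Rdot R using hy
  simp [br1_coe, d1]

theorem d2_br2 (x y z : R) :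
    d2 R (br2 R x y z, 0) = br1 R y z - br1 R (x + y) z + br1 R x (y + z) - br1 R x y := by
  by_cases hx : x = 0
  · simp [hx, br2, br1_zero_left, Prod.mk_zero_zero]
  by_cases hy : y = 0
  · simp [hy, br2, br1_zero_left, br1_zero_right, Prod.mk_zero_zero]
  by_cases hz : z = 0
  · simp [hz, br2, br1_zero_right, Prod.mk_zero_zero]
  lift x to Rdot R using hx
  lift y to Rdot R using hy
  lift z to Rdot R using hz
  simp [br2_coe, d2]

theorem d2_br1 (x y : R) : d2 R (0, br1 R x y) = br1 R x y - br1 R y x := by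
  by_cases hx : x = 0
  · simp [hx, br1_zero_left, br1_zero_right, Prod.mk_zero_zero]
  by_cases hy : y = 0
  · simp [hy, br1_zero_left, br1_zero_right, Prod.mk_zero_zero]
  lift x to Rdot R using hx
  lift y to Rdot R using hy
  simp [br1_coe, d2]

theorem d1_comp_d2 : (d1 R).comp (d2 R) = 0 := by
  rw [← ((d1 R).comp (d2 R)).coprod_unique]
  have h_inl : ((d1 R).comp (d2 R)).comp (.inl _ _) = 0 := by
    ext ⟨x, y, z⟩
    simp only [AddMonoidHom.comp_apply, AddMonoidHom.inl_apply, AddMonoidHom.zero_apply,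
      ← br2_coe, d2_br2, map_sub, map_add, d1_br1, add_assoc]
    abel
  have h_inr : ((d1 R).comp (d2 R)).comp (.inr _ _) = 0 := by
    ext ⟨x, y⟩
    simp only [AddMonoidHom.comp_apply, AddMonoidHom.inr_apply, AddMonoidHom.zero_apply,
      ← br1_coe, d2_br1, map_sub, d1_br1, add_comm (y : R)]
    abel
  rw [h_inl, h_inr]
  ext; simp

namespace SymmCocycle

variable {A : Type*} [AddCommGroup A] (c : SymmCocycle R A)

def liftB1 : B1 R →+ A := FreeAbelianGroup.lift fun p => c p.1 p.2

theorem ker_d1_le_ker_liftB1 : (d1 R).ker ≤ c.liftB1.ker := by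
  let φ : B0 R →+ Ext c := FreeAbelianGroup.lift fun x => ⟨0, x⟩
  have hφ (x : R) : φ (br0 R x) = ⟨0, x⟩ := by
    by_cases hx : x = 0
    · rw [hx, br0_zero, map_zero, Ext.zero_def]
    lift x to Rdot R using hx
    rw [br0_coe, FreeAbelianGroup.lift_apply_of]
  have hcomp : φ.comp (d1 R) = Ext.inlHom.comp c.liftB1 := by
    ext ⟨x, y⟩
    rw [AddMonoidHom.comp_apply, AddMonoidHom.comp_apply, ← br1_coe, d1_br1, map_add, map_sub,
      hφ, hφ, hφ, Ext.mk_zero_sub_mk_zero_add_mk_zero, br1_coe, liftB1,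
      FreeAbelianGroup.lift_apply_of]
    rfl
  intro b hb
  have h := congrArg Ext.fst (DFunLike.congr_fun hcomp b)
  simpa [(d1 R).mem_ker.mp hb, Ext.zero_def, Ext.inlHom] using h.symm

end SymmCocycle

noncomputable def cokerD2Cocycle : SymmCocycle R (B1 R ⧸ (d2 R).range) where
  toFun x y := br1 R x y
  zero_left y := by rw [br1_zero_left, QuotientAddGroup.mk_zero]
  symm x y := (QuotientAddGroup.eq_iff_sub_mem).mpr ⟨(0, br1 R x y), d2_br1 x y⟩
  cocycle x y z := by
    rw [← QuotientAddGroup.mk_add, ← QuotientAddGroup.mk_add, QuotientAddGroup.eq_iff_sub_mem]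
    refine ⟨(br2 R x y z, 0), ?_⟩
    rw [d2_br2]
    abel

theorem liftB1_cokerD2Cocycle :
    (cokerD2Cocycle (R := R)).liftB1 = QuotientAddGroup.mk' (d2 R).range := by
  ext ⟨x, y⟩
  simp [SymmCocycle.liftB1, cokerD2Cocycle, br1_coe]

/-- The complex is exact at `B₁`: the kernel of
`d₁ : B₁ → B₀` equals the image of `d₂ : B₂ → B₁`. -/
theorem complex_exact_at_B1 (R : Type*) [Ring R] :
    (d1 R).ker = (d2 R).range := by
  refine le_antisymm ?_ ((AddMonoidHom.range_le_ker_iff _ _).mpr d1_comp_d2)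
  calc (d1 R).ker ≤ (cokerD2Cocycle (R := R)).liftB1.ker := SymmCocycle.ker_d1_le_ker_liftB1 _
    _ = (d2 R).range := by rw [liftB1_cokerD2Cocycle, QuotientAddGroup.ker_mk']
end
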